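/- arXiv:2006.09371 — 2 statements merged into one kernel-verified Lean document; each statement's English description precedes it below -/
import Mathlib

section
/- If X is a φ-prime submodule of M such that X(X:_R M) ⊄ φ(X), then X is a prime submodule of M. -/
open MulOpposite Submodule

variable {R : Type*} [Ring R] {M : Type*} [AddCommGroup M] [Module Rᵐᵒᵖ M]

/-- The product `Y·A` of a set of elements of a right `R`-module `M` and a set of ring
elements: the submodule of all finite sums `Σ yᵢ·aᵢ` with `yᵢ ∈ Y`, `aᵢ ∈ A`. -/
def sProd (Y : Set M) (A : Set R) : Submodule Rᵐᵒᵖ M :=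
  Submodule.span Rᵐᵒᵖ {z | ∃ y ∈ Y, ∃ a ∈ A, z = op a • y}

/-- `(X :_R N) = {r : R | N·r ⊆ X}`. -/
def colR (X : Set M) (N : Set M) : Set R := {r | ∀ m ∈ N, op r • m ∈ X}

/-- `(X :_M A) = {m : M | m·A ⊆ X}`. -/
def colM (X : Set M) (A : Set R) : Set M := {m | ∀ r ∈ A, op r • m ∈ X}

/-- A function `φ : S(M) → S(M) ∪ {∅}` (values are either `∅` or submodules) with
`φ(X) ⊆ X` for every submodule `X`. -/
def GoodPhi (φ : Submodule Rᵐᵒᵖ M → Set M) : Prop :=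
  ∀ N : Submodule Rᵐᵒᵖ M, φ N ⊆ N ∧
    (φ N = (∅ : Set M) ∨ ∃ P : Submodule Rᵐᵒᵖ M, φ N = (P : Set M))

/-- `X` is a φ-prime submodule of the right `R`-module `M`. -/
def PhiPrime (φ : Submodule Rᵐᵒᵖ M → Set M) (X : Submodule Rᵐᵒᵖ M) : Prop :=
  X ≠ ⊤ ∧ ∀ (Y : Submodule Rᵐᵒᵖ M) (I : TwoSidedIdeal R),
    (sProd (Y : Set M) (I : Set R) : Set M) ⊆ (X : Set M) →
    ¬((sProd (Y : Set M) (I : Set R) : Set M) ⊆ φ X) →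
    (Y : Set M) ⊆ (X : Set M) ∨ (I : Set R) ⊆ colR (X : Set M) Set.univ

/-- `X` is a prime submodule of the right `R`-module `M`. -/
def PrimeSub (X : Submodule Rᵐᵒᵖ M) : Prop :=
  X ≠ ⊤ ∧ ∀ (Y : Submodule Rᵐᵒᵖ M) (I : TwoSidedIdeal R),
    (sProd (Y : Set M) (I : Set R) : Set M) ⊆ (X : Set M) →
    (Y : Set M) ⊆ (X : Set M) ∨ (I : Set R) ⊆ colR (X : Set M) Set.univ

/-- `X` is a weakly prime submodule of the right `R`-module `M`. -/
def WeaklyPrime (X : Submodule Rᵐᵒᵖ M) : Prop :=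
  X ≠ ⊤ ∧ ∀ (Y : Submodule Rᵐᵒᵖ M) (I : TwoSidedIdeal R),
    sProd (Y : Set M) (I : Set R) ≠ ⊥ →
    (sProd (Y : Set M) (I : Set R) : Set M) ⊆ (X : Set M) →
    (Y : Set M) ⊆ (X : Set M) ∨ (I : Set R) ⊆ colR (X : Set M) Set.univ

/-- `X` is an almost prime submodule of the right `R`-module `M`. -/
def AlmostPrime (X : Submodule Rᵐᵒᵖ M) : Prop :=
  X ≠ ⊤ ∧ ∀ (Y : Submodule Rᵐᵒᵖ M) (I : TwoSidedIdeal R),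
    (sProd (Y : Set M) (I : Set R) : Set M) ⊆ (X : Set M) →
    ¬((sProd (Y : Set M) (I : Set R) : Set M) ⊆
        (sProd (X : Set M) ((colR (X : Set M) Set.univ : Set R)) : Set M)) →
    (Y : Set M) ⊆ (X : Set M) ∨ (I : Set R) ⊆ colR (X : Set M) Set.univ

/-- `powAct X n = X (X :_R M)ⁿ`. -/
def powAct (X : Submodule Rᵐᵒᵖ M) : ℕ → Submodule Rᵐᵒᵖ M
  | 0 => X
  | n + 1 => sProd (powAct X n : Set M) ((colR (X : Set M) Set.univ : Set R))

/-- The product of two sets of ring elements: all finite sums `Σ aᵢbᵢ`, `aᵢ ∈ A`, `bᵢ ∈ B`. -/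
def idMul (A B : Set R) : Set R :=
  (AddSubmonoid.closure {x | ∃ a ∈ A, ∃ b ∈ B, x = a * b} : AddSubmonoid R)

/-- A prime (two-sided) ideal of a possibly noncommutative ring. -/
def TIPrime (P : TwoSidedIdeal R) : Prop :=
  (P : Set R) ≠ Set.univ ∧ ∀ I J : TwoSidedIdeal R,
    idMul (I : Set R) (J : Set R) ⊆ (P : Set R) →
    (I : Set R) ⊆ (P : Set R) ∨ (J : Set R) ⊆ (P : Set R)

/-- The radical `√A`: the intersection of all prime two-sided ideals containing `A`. -/
def radSet (A : Set R) : Set R :=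
  {x | ∀ P : TwoSidedIdeal R, TIPrime P → A ⊆ (P : Set R) → x ∈ (P : Set R)}

/-- A ψ-prime two-sided ideal of a possibly noncommutative ring. -/
def PsiPrime (ψ : TwoSidedIdeal R → Set R) (A : TwoSidedIdeal R) : Prop :=
  (A : Set R) ≠ Set.univ ∧ ∀ I J : TwoSidedIdeal R,
    idMul (I : Set R) (J : Set R) ⊆ (A : Set R) →
    ¬(idMul (I : Set R) (J : Set R) ⊆ ψ A) →
    (I : Set R) ⊆ (A : Set R) ∨ (J : Set R) ⊆ (A : Set R)

/-- The induced function `φ_Y` on submodules of `M/Y`: `φ_Y(X/Y) = (φ(X)+Y)/Y`. -/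
def phiQuot (φ : Submodule Rᵐᵒᵖ M → Set M) (Y : Submodule Rᵐᵒᵖ M) :
    Submodule Rᵐᵒᵖ (M ⧸ Y) → Set (M ⧸ Y) :=
  fun Q => Y.mkQ '' (φ (Q.comap Y.mkQ))

/-- The colon `(X :_R Y)` of two submodules, as a two-sided ideal of `R`. -/
def colTI (X Y : Submodule Rᵐᵒᵖ M) : TwoSidedIdeal R :=
  TwoSidedIdeal.mk' (colR (X : Set M) (Y : Set M))
    (by intro m hm; simp)
    (by intro x y hx hy m hm
        rw [op_add, add_smul]
        exact X.add_mem (hx m hm) (hy m hm))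
    (by intro x hx m hm
        rw [op_neg, neg_smul]
        exact X.neg_mem (hx m hm))
    (by intro x y hy m hm
        rw [op_mul, mul_smul]
        exact hy _ (Y.smul_mem (op x) hm))
    (by intro x y hx m hm
        rw [op_mul, mul_smul]
        exact X.smul_mem (op y) (hx m hm))

/-- The colon `(X :_M I)` as a submodule of `M`, for a two-sided ideal `I`. -/
def colMS (X : Submodule Rᵐᵒᵖ M) (I : TwoSidedIdeal R) : Submodule Rᵐᵒᵖ M where
  carrier := colM (X : Set M) (I : Set R)
  add_mem' := by
    intro a b ha hb r hr
    rw [smul_add]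
    exact X.add_mem (ha r hr) (hb r hr)
  zero_mem' := by
    intro r hr
    rw [smul_zero]
    exact X.zero_mem
  smul_mem' := by
    intro c m hm r hr
    rw [← mul_smul, show op r * c = op (unop c * r) from by rw [op_mul, op_unop]]
    exact hm _ (I.mul_mem_left _ _ hr)

/-- `M` is a multiplication right `R`-module: every submodule `X` equals `M(X :_R M)`. -/
def IsMultiplication (R : Type*) [Ring R] (M : Type*) [AddCommGroup M]
    [Module Rᵐᵒᵖ M] : Prop :=
  ∀ X : Submodule Rᵐᵒᵖ M, X = sProd (Set.univ : Set M) ((colR (X : Set M) Set.univ : Set R))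

/-- The product `XY = M(X :_R M)(Y :_R M)` of two submodules of a multiplication module. -/
def mprod (X Y : Submodule Rᵐᵒᵖ M) : Submodule Rᵐᵒᵖ M :=
  sProd ((sProd (Set.univ : Set M) ((colR (X : Set M) Set.univ : Set R)) : Submodule Rᵐᵒᵖ M) : Set M)
    ((colR (Y : Set M) Set.univ : Set R))

/-- A φ-m-system in a right `R`-module `M`. -/
def PhiMSystem (φ : Submodule Rᵐᵒᵖ M → Set M) (S : Set M) : Prop :=
  S.Nonempty ∧ ∀ (Y₁ Y₂ : Submodule Rᵐᵒᵖ M) (I : TwoSidedIdeal R),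
    ((Y₁ ⊔ Y₂ : Submodule Rᵐᵒᵖ M) : Set M) ∩ S ≠ ∅ →
    ((Y₁ ⊔ sProd (Set.univ : Set M) (I : Set R) : Submodule Rᵐᵒᵖ M) : Set M) ∩ S ≠ ∅ →
    ¬((sProd (Y₂ : Set M) (I : Set R) : Set M) ⊆ φ (Submodule.span Rᵐᵒᵖ Sᶜ)) →
    ((Y₁ ⊔ sProd (Y₂ : Set M) (I : Set R) : Submodule Rᵐᵒᵖ M) : Set M) ∩ S ≠ ∅

section sProd

variable {N : Submodule Rᵐᵒᵖ M}

theorem sProd_le_iff {Y : Set M} {A : Set R} :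
    sProd Y A ≤ N ↔ ∀ y ∈ Y, ∀ a ∈ A, op a • y ∈ N := by
  rw [sProd, span_le]
  exact ⟨fun h y hy a ha => h ⟨y, hy, a, ha, rfl⟩, fun h _ ⟨y, hy, a, ha, e⟩ => e ▸ h y hy a ha⟩

theorem sProd_mono {Y Y' : Set M} {A A' : Set R} (hY : Y ⊆ Y') (hA : A ⊆ A') :
    sProd Y A ≤ sProd Y' A' :=
  span_mono fun _ ⟨y, hy, a, ha, e⟩ => ⟨y, hY hy, a, hA ha, e⟩

theorem sProd_le_of_subset {Y : Set M} (hY : Y ⊆ N) (A : Set R) : sProd Y A ≤ N :=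
  sProd_le_iff.2 fun _ hy _ _ => N.smul_mem _ (hY hy)

theorem sProd_le_of_subset_colR {A : Set R} (hA : A ⊆ colR (N : Set M) Set.univ) (Y : Set M) :
    sProd Y A ≤ N :=
  sProd_le_iff.2 fun y _ _ ha => hA ha y trivial

theorem sProd_sup_left (Y Y' : Submodule Rᵐᵒᵖ M) (A : Set R) :
    sProd ((Y ⊔ Y' : Submodule Rᵐᵒᵖ M) : Set M) A =
      sProd (Y : Set M) A ⊔ sProd (Y' : Set M) A := by
  refine le_antisymm (sProd_le_iff.2 fun y hy a ha => ?_)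
    (sup_le (sProd_mono (SetLike.coe_subset_coe.2 le_sup_left) subset_rfl)
      (sProd_mono (SetLike.coe_subset_coe.2 le_sup_right) subset_rfl))
  obtain ⟨u, hu, v, hv, rfl⟩ := mem_sup.1 hy
  rw [smul_add]
  exact add_mem (mem_sup_left (subset_span ⟨u, hu, a, ha, rfl⟩))
    (mem_sup_right (subset_span ⟨v, hv, a, ha, rfl⟩))

theorem sProd_sup_right (Y : Set M) (I J : TwoSidedIdeal R) :
    sProd Y ((I ⊔ J : TwoSidedIdeal R) : Set R) = sProd Y (I : Set R) ⊔ sProd Y (J : Set R) := by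
  refine le_antisymm (sProd_le_iff.2 fun y hy a ha => ?_)
    (sup_le (sProd_mono subset_rfl fun _ => TwoSidedIdeal.mem_sup_left)
      (sProd_mono subset_rfl fun _ => TwoSidedIdeal.mem_sup_right))
  obtain ⟨i, hi, j, hj, rfl⟩ := TwoSidedIdeal.mem_sup.1 ha
  rw [op_add, add_smul]
  exact add_mem (mem_sup_left (subset_span ⟨y, hy, i, hi, rfl⟩))
    (mem_sup_right (subset_span ⟨y, hy, j, hj, rfl⟩))

end sProd

theorem coe_colTI_top (X : Submodule Rᵐᵒᵖ M) :
    ((colTI X ⊤ : TwoSidedIdeal R) : Set R) = colR (X : Set M) Set.univ :=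
  TwoSidedIdeal.coe_mk' ..

theorem sProd_sup_self_sup_colTI_top_le {X Y : Submodule Rᵐᵒᵖ M} {I : TwoSidedIdeal R}
    (hYI : sProd (Y : Set M) (I : Set R) ≤ X) :
    sProd ((Y ⊔ X : Submodule Rᵐᵒᵖ M) : Set M) ((I ⊔ colTI X ⊤ : TwoSidedIdeal R) : Set R) ≤ X := by
  have hcol := (coe_colTI_top X).subset
  rw [sProd_sup_left, sProd_sup_right, sProd_sup_right]
  exact sup_le (sup_le hYI (sProd_le_of_subset_colR hcol _))
    (sup_le (sProd_le_of_subset subset_rfl _) (sProd_le_of_subset_colR hcol _))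

theorem stmt_2_general (φ : Submodule Rᵐᵒᵖ M → Set M)
    (X : Submodule Rᵐᵒᵖ M) (hX : PhiPrime φ X)
    (h : ¬((sProd (X : Set M) ((colR (X : Set M) Set.univ : Set R)) : Set M) ⊆ φ X)) :
    PrimeSub X := by
  refine ⟨hX.1, fun Y I hYI => ?_⟩
  -- Apply φ-primality to `(Y + X)(I + (X :_R M))`: it still lies in `X` but contains `X(X :_R M)`.
  have hXJ : sProd (X : Set M) (colR (X : Set M) Set.univ) ≤
      sProd ((Y ⊔ X : Submodule Rᵐᵒᵖ M) : Set M) ((I ⊔ colTI X ⊤ : TwoSidedIdeal R) : Set R) :=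
    sProd_mono (SetLike.coe_subset_coe.2 le_sup_right)
      ((coe_colTI_top X).superset.trans fun _ => TwoSidedIdeal.mem_sup_right)
  rcases hX.2 _ _ (sProd_sup_self_sup_colTI_top_le hYI)
    (fun hφ => h ((SetLike.coe_subset_coe.2 hXJ).trans hφ)) with hY | hI
  · exact Or.inl ((SetLike.coe_subset_coe.2 le_sup_left).trans hY)
  · exact Or.inr (Set.Subset.trans (fun _ => TwoSidedIdeal.mem_sup_left) hI)

/-- If `X` is a φ-prime submodule of `M` such that
`X(X :_R M) ⊄ φ(X)`, then `X` is a prime submodule of `M`. -/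
theorem stmt_2 (φ : Submodule Rᵐᵒᵖ M → Set M) (hφ : GoodPhi φ)
    (X : Submodule Rᵐᵒᵖ M) (hX : PhiPrime φ X)
    (h : ¬((sProd (X : Set M) ((colR (X : Set M) Set.univ : Set R)) : Set M) ⊆ φ X)) :
    PrimeSub X :=
  stmt_2_general φ X hX h
end

section
/- Let X be a proper submodule of M. The following are equivalent: (1) X is a φ-prime submodule of M; (2) for every ideal I of R with I ⊄ (X:_R M), (X:_M I) = X ∪ (φ(X):_M I); (3) for every ideal I of R with I ⊄ (X:_R M), (X:_M I) = X or (X:_M I) = (φ(X):_M I). -/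
open MulOpposite Submodule

variable {R : Type*} [Ring R] {M : Type*} [AddCommGroup M] [Module Rᵐᵒᵖ M]

lemma mem_sProd {Y : Set M} {A : Set R} {y : M} {a : R} (hy : y ∈ Y) (ha : a ∈ A) :
    op a • y ∈ sProd Y A :=
  subset_span ⟨y, hy, a, ha, rfl⟩

lemma sProd_le_iff_s11 {Y : Set M} {A : Set R} {X : Submodule Rᵐᵒᵖ M} :
    sProd Y A ≤ X ↔ Y ⊆ colM (X : Set M) A := by
  refine span_le.trans ⟨fun h y hy a ha => h ⟨y, hy, a, ha, rfl⟩, ?_⟩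
  rintro h _ ⟨y, hy, a, ha, rfl⟩
  exact h hy a ha

lemma subset_colM (X : Submodule Rᵐᵒᵖ M) (A : Set R) : (X : Set M) ⊆ colM (X : Set M) A :=
  fun _ hx a _ => X.smul_mem (op a) hx

lemma colM_mono {S T : Set M} (h : S ⊆ T) (A : Set R) : colM S A ⊆ colM T A :=
  fun _ hm a ha => h (hm a ha)

lemma colM_empty {A : Set R} (hA : A.Nonempty) : colM (∅ : Set M) A = ∅ :=
  Set.eq_empty_of_forall_notMem fun _ hm => hm _ hA.some_mem

/-- For `I ⊄ (X :_R M)`, an element `m` of `(X :_M I)` outside `(φ(X) :_M I)` spans a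
submodule `Y` with `YI ⊆ X`, `YI ⊄ φ(X)`, so φ-primality puts `m` in `X`. -/
theorem PhiPrime.colM_eq_union {φ : Submodule Rᵐᵒᵖ M → Set M} {X : Submodule Rᵐᵒᵖ M}
    (hφX : φ X ⊆ X) (hX : PhiPrime φ X) {I : TwoSidedIdeal R}
    (hI : ¬(I : Set R) ⊆ colR (X : Set M) Set.univ) :
    colM (X : Set M) (I : Set R) = (X : Set M) ∪ colM (φ X) (I : Set R) := by
  refine subset_antisymm (fun m hm => ?_)
    (Set.union_subset (subset_colM X _) (colM_mono hφX _))
  by_contra hmX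
  obtain ⟨hmX, hmφ⟩ := not_or.mp hmX
  obtain ⟨r, hr, hrm⟩ : ∃ r ∈ (I : Set R), op r • m ∉ φ X := by
    simpa [colM] using hmφ
  have hYI : sProd ((span Rᵐᵒᵖ {m} : Submodule Rᵐᵒᵖ M) : Set M) (I : Set R) ≤ X :=
    sProd_le_iff_s11.mpr ((span_singleton_le_iff_mem m (colMS X I)).mpr hm)
  have hYIφ : ¬(sProd ((span Rᵐᵒᵖ {m} : Submodule Rᵐᵒᵖ M) : Set M) (I : Set R) : Set M) ⊆ φ X :=
    fun h => hrm (h (mem_sProd (mem_span_singleton_self m) hr))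
  rcases hX.2 _ I hYI hYIφ with hmX' | hI'
  · exact hmX (hmX' (mem_span_singleton_self m))
  · exact hI hI'

/-- A submodule that is the union of two of its submodules is one of them. -/
lemma colM_eq_or_eq_of_eq_union {X : Submodule Rᵐᵒᵖ M} {S : Set M}
    (hS : S = ∅ ∨ ∃ P : Submodule Rᵐᵒᵖ M, S = P) {I : TwoSidedIdeal R}
    (h : colM (X : Set M) (I : Set R) = (X : Set M) ∪ colM S (I : Set R)) :
    colM (X : Set M) (I : Set R) = X ∨ colM (X : Set M) (I : Set R) = colM S (I : Set R) := by
  rcases hS with rfl | ⟨P, rfl⟩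
  · left
    rw [h, colM_empty ⟨0, I.zero_mem⟩, Set.union_empty]
  · have hle : colMS X I ≤ X ∨ colMS X I ≤ colMS P I :=
      AddSubgroupClass.subset_union.mp h.subset
    refine hle.imp (fun hle => ?_) (fun hle => ?_) <;>
      refine subset_antisymm hle ?_ <;> rw [h]
    exacts [Set.subset_union_left, Set.subset_union_right]

theorem phiPrime_of_colM_eq_or_eq {φ : Submodule Rᵐᵒᵖ M → Set M} {X : Submodule Rᵐᵒᵖ M}
    (hφX : φ X = ∅ ∨ ∃ P : Submodule Rᵐᵒᵖ M, φ X = P) (hX : X ≠ ⊤)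
    (h : ∀ I : TwoSidedIdeal R, ¬(I : Set R) ⊆ colR (X : Set M) Set.univ →
      colM (X : Set M) (I : Set R) = X ∨
        colM (X : Set M) (I : Set R) = colM (φ X) (I : Set R)) :
    PhiPrime φ X := by
  refine ⟨hX, fun Y I hYI hYIφ => or_iff_not_imp_right.mpr fun hI => ?_⟩
  have hY : (Y : Set M) ⊆ colM (X : Set M) (I : Set R) := sProd_le_iff_s11.mp hYI
  rcases h I hI with hXI | hXφ
  · exact hXI ▸ hY
  rw [hXφ] at hY
  rcases hφX with hφX | ⟨P, hφX⟩
  · rw [hφX, colM_empty ⟨0, I.zero_mem⟩] at hY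
    exact (hY Y.zero_mem).elim
  · rw [hφX] at hY hYIφ
    exact absurd (sProd_le_iff_s11.mpr hY) hYIφ

/-- For a proper submodule `X` of `M`, TFAE: (1) `X` is φ-prime;
(2) for every ideal `I ⊄ (X :_R M)`, `(X :_M I) = X ∪ (φ(X) :_M I)`;
(3) for every ideal `I ⊄ (X :_R M)`, `(X :_M I) = X` or `(X :_M I) = (φ(X) :_M I)`. -/
theorem stmt_11 (φ : Submodule Rᵐᵒᵖ M → Set M) (hφ : GoodPhi φ)
    (X : Submodule Rᵐᵒᵖ M) (hX : X ≠ ⊤) :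
    [PhiPrime φ X,
     ∀ I : TwoSidedIdeal R, ¬((I : Set R) ⊆ (colR (X : Set M) Set.univ : Set R)) →
       colM (X : Set M) (I : Set R) = (X : Set M) ∪ colM (φ X) (I : Set R),
     ∀ I : TwoSidedIdeal R, ¬((I : Set R) ⊆ (colR (X : Set M) Set.univ : Set R)) →
       (colM (X : Set M) (I : Set R) = (X : Set M) ∨
        colM (X : Set M) (I : Set R) = colM (φ X) (I : Set R))].TFAE := by
  tfae_have 1 → 2 := fun h I hI => h.colM_eq_union (hφ X).1 hI
  tfae_have 2 → 3 := fun h I hI => colM_eq_or_eq_of_eq_union (hφ X).2 (h I hI)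
  tfae_have 3 → 1 := phiPrime_of_colM_eq_or_eq (hφ X).2 hX
  tfae_finish
end
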